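/- arXiv:1105.5313 — 2 statements merged into one kernel-verified Lean document; each statement's English description precedes it below -/
import Mathlib

section
/- Two permutations w, v ∈ S_n have equal left-to-right maximum functions and equal right-to-left minimum functions (α_w = α_v and β_w = β_v) if and only if they have the same image in the double Catalan monoid; moreover in each such equivalence class the unique 4321-avoiding permutation is Bruhat-minimal. -/
open Pointwise

/-- The simple transposition `(i, i+1)` in the symmetric group on `Fin n`. -/
def simpleT {n : ℕ} (i : Fin (n - 1)) : Equiv.Perm (Fin n) :=
  Equiv.swap ⟨i.1, by have := i.2; omega⟩ ⟨i.1 + 1, by have := i.2; omega⟩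

/-- Defining relations of the 0-Hecke monoid. -/
def heckeRels (n : ℕ) : Set (FreeMonoid (Fin (n - 1)) × FreeMonoid (Fin (n - 1))) :=
  {p | (∃ i, p = (FreeMonoid.of i * FreeMonoid.of i, FreeMonoid.of i)) ∨
       (∃ i j, i.1 + 2 ≤ j.1 ∧
          p = (FreeMonoid.of i * FreeMonoid.of j, FreeMonoid.of j * FreeMonoid.of i)) ∨
       (∃ i j, j.1 = i.1 + 1 ∧
          p = (FreeMonoid.of i * FreeMonoid.of j * FreeMonoid.of i,
               FreeMonoid.of j * FreeMonoid.of i * FreeMonoid.of j))}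

/-- The congruence on the free monoid generated by the 0-Hecke relations. -/
def heckeCon (n : ℕ) : Con (FreeMonoid (Fin (n - 1))) :=
  conGen (fun a b => (a, b) ∈ heckeRels n)

/-- The 0-Hecke monoid `H_n`. -/
abbrev Hecke (n : ℕ) := (heckeCon n).Quotient

/-- The generator `e_i` of the 0-Hecke monoid. -/
def heckeGen (n : ℕ) (i : Fin (n - 1)) : Hecke n := (heckeCon n).mk' (FreeMonoid.of i)

/-- Binary relations on `Fin n` (equivalently, `n × n` Boolean matrices),
with `ξ i j` meaning the `(i,j)` entry is `1`. -/
abbrev BRel (n : ℕ) := Fin n → Fin n → Prop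

/-- The monoid of binary relations / Boolean matrices, under relational
composition (= Boolean matrix multiplication). -/
instance BRel.instMonoid (n : ℕ) : Monoid (BRel n) where
  mul r s := fun i j => ∃ k, r i k ∧ s k j
  one := fun i j => i = j
  mul_assoc r s t := by
    funext i j
    show (∃ k, (∃ m, r i m ∧ s m k) ∧ t k j) = (∃ m, r i m ∧ ∃ k, s m k ∧ t k j)
    apply propext; tauto
  one_mul r := by
    funext i j
    show (∃ k, i = k ∧ r k j) = r i j
    apply propext
    constructor
    · rintro ⟨k, rfl, h⟩; exact h
    · intro h; exact ⟨i, rfl, h⟩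
  mul_one r := by
    funext i j
    show (∃ k, r i k ∧ k = j) = r i j
    apply propext
    constructor
    · rintro ⟨k, h, rfl⟩; exact h
    · intro h; exact ⟨j, h, rfl⟩

theorem BRel.mul_def {n : ℕ} (r s : BRel n) (i j : Fin n) :
    (r * s) i j ↔ ∃ k, r i k ∧ s k j := Iff.rfl

theorem BRel.one_def {n : ℕ} (i j : Fin n) : (1 : BRel n) i j ↔ i = j := Iff.rfl

/-- The generator `ε_i = Φ(id) + Φ(s_i)` of the double Catalan monoid:
the identity matrix plus extra `1` entries at `(i, i+1)` and `(i+1, i)`. -/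
def eps {n : ℕ} (i : Fin (n - 1)) : BRel n := fun a b => a = b ∨ a = simpleT i b

/-- The double Catalan monoid `DC_n`, the submonoid of Boolean matrices
generated by the `ε_i`. -/
def DC (n : ℕ) : Submonoid (BRel n) := Submonoid.closure (Set.range (eps (n := n)))

open Classical in
/-- `max(ξ)(j)` : the largest row index `i` with `ξ i j` (for a reflexive
relation; the diagonal element `j` is thrown in to guarantee nonemptiness). -/
noncomputable def maxF {n : ℕ} (ξ : BRel n) (j : Fin n) : Fin n :=
  (insert j (Finset.univ.filter fun i => ξ i j)).max' (Finset.insert_nonempty _ _)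

open Classical in
/-- `min(ξ)(j)` : the smallest row index `i` with `ξ i j`. -/
noncomputable def minF {n : ℕ} (ξ : BRel n) (j : Fin n) : Fin n :=
  (insert j (Finset.univ.filter fun i => ξ i j)).min' (Finset.insert_nonempty _ _)

/-- A set of `Fin n` is an interval of consecutive integers. -/
def IsIntervalSet {n : ℕ} (S : Set (Fin n)) : Prop :=
  ∀ ⦃a b c : Fin n⦄, a ≤ b → b ≤ c → a ∈ S → c ∈ S → b ∈ S

/-- A binary relation is convex if it is reflexive and all its rows and
columns are intervals. -/
def IsConvexRel {n : ℕ} (ξ : BRel n) : Prop :=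
  (∀ i, ξ i i) ∧ (∀ j, IsIntervalSet {i | ξ i j}) ∧ (∀ j, IsIntervalSet {i | ξ j i})

/-- The left-to-right maximum function `α_w`. -/
def lrMax {n : ℕ} (w : Equiv.Perm (Fin n)) (j : Fin n) : Fin n :=
  (Finset.Iic j).sup' ⟨j, Finset.mem_Iic.2 le_rfl⟩ (fun k => w k)

/-- The right-to-left minimum function `β_w`. -/
def rlMin {n : ℕ} (w : Equiv.Perm (Fin n)) (j : Fin n) : Fin n :=
  (Finset.Ici j).inf' ⟨j, Finset.mem_Ici.2 le_rfl⟩ (fun k => w k)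

/-- The Boolean matrix `Ψ(z_w)`, the image of `w` in the double Catalan
monoid: the `(i,j)` entry is `1` iff `β_w(j) ≤ i ≤ α_w(j)`. -/
def psiMat {n : ℕ} (w : Equiv.Perm (Fin n)) : BRel n :=
  fun i j => rlMin w j ≤ i ∧ i ≤ lrMax w j

/-- `l` is a reduced word for the permutation `w`. -/
def IsRedWord {n : ℕ} (w : Equiv.Perm (Fin n)) (l : List (Fin (n - 1))) : Prop :=
  (l.map simpleT).prod = w ∧
    ∀ l' : List (Fin (n - 1)), (l'.map simpleT).prod = w → l.length ≤ l'.length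

/-- The Bruhat order on the symmetric group, via the subword property. -/
def bruhatLE {n : ℕ} (u w : Equiv.Perm (Fin n)) : Prop :=
  ∃ lw, IsRedWord w lw ∧ ∃ lu, lu.Sublist lw ∧ IsRedWord u lu

/-- `w` is 321-avoiding. -/
def Avoids321 {n : ℕ} (w : Equiv.Perm (Fin n)) : Prop :=
  ¬ ∃ i j k : Fin n, i < j ∧ j < k ∧ w k < w j ∧ w j < w i

/-- `w` is 312-avoiding. -/
def Avoids312 {n : ℕ} (w : Equiv.Perm (Fin n)) : Prop :=
  ¬ ∃ i j k : Fin n, i < j ∧ j < k ∧ w j < w k ∧ w k < w i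

/-- `w` is 4321-avoiding. -/
def Avoids4321 {n : ℕ} (w : Equiv.Perm (Fin n)) : Prop :=
  ¬ ∃ i j k l : Fin n, i < j ∧ j < k ∧ k < l ∧ w l < w k ∧ w k < w j ∧ w j < w i

/-- The monoid `C_n^+` of order-preserving non-decreasing transformations. -/
def Cplus (n : ℕ) : Submonoid (Function.End (Fin n)) where
  carrier := {f | Monotone f ∧ ∀ i, i ≤ f i}
  one_mem' := ⟨monotone_id, fun _ => le_rfl⟩
  mul_mem' := by
    rintro f g ⟨hf1, hf2⟩ ⟨hg1, hg2⟩
    exact ⟨hf1.comp hg1, fun i => (hg2 i).trans (hf2 (g i))⟩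

/-- The monoid `C_n^-` of order-preserving non-increasing transformations. -/
def Cminus (n : ℕ) : Submonoid (Function.End (Fin n)) where
  carrier := {f | Monotone f ∧ ∀ i, f i ≤ i}
  one_mem' := ⟨monotone_id, fun _ => le_rfl⟩
  mul_mem' := by
    rintro f g ⟨hf1, hf2⟩ ⟨hg1, hg2⟩
    exact ⟨hf1.comp hg1, fun i => (hf2 (g i)).trans (hg2 i)⟩


/-!
Comparing the columns of `psiMat` recovers `lrMax` and `rlMin`.

Call a position *middle* if it is neither a left-to-right maximum nor a right-to-left minimum.
The middle positions, and the values at all other positions, are determined by `lrMax` and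
`rlMin`, and a 4321-avoiding permutation is increasing on its middle positions (a descent there
extends to a 4321 pattern); so a fibre of `(lrMax, rlMin)` contains at most one 4321-avoiding
permutation. If `v` contains a pattern `v a > v b > v c > v d`, then `v * swap b c` lies in the
same fibre, and by the strong exchange property it is the product of a word of `v` with one
letter deleted. Deleting letters from a reduced word of `v` in this way until no 4321 pattern is
left gives a word for the 4321-avoiding element `w` of the fibre, and a reduced subword of it
witnesses `w ≤ v`.
-/

namespace Equiv

section LinearOrder

variable {α : Type*} [LinearOrder α] {a b c i j k : α}

theorem swap_lt_swap_of_covBy (hab : a ⋖ b) (hij : i < j) (hne : (i, j) ≠ (a, b)) :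
    swap a b i < swap a b j := by
  have := hab.2 (c := i); have := hab.2 (c := j); have := hab.lt
  rw [swap_apply_def, swap_apply_def]
  split_ifs <;> simp_all <;> order

theorem swap_apply_le_of_le (hbc : b < c) (hkj : k ≤ j) (hkb : k ≠ b) : swap b c k ≤ j := by
  rw [swap_apply_def]
  split_ifs <;> order

theorem le_swap_apply_of_le (hbc : b < c) (hjk : j ≤ k) (hkc : k ≠ c) : j ≤ swap b c k := by
  rw [swap_apply_def]
  split_ifs <;> order

end LinearOrder

namespace Perm

variable {α : Type*}

theorem image_eq_of_eqOn_compl {w v : Perm α} {s : Set α}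
    (h : ∀ j ∉ s, w j = v j) : w '' s = v '' s := by
  suffices key : ∀ w v : Perm α, (∀ j ∉ s, w j = v j) → w '' s ⊆ v '' s from
    (key w v h).antisymm (key v w fun j hj => (h j hj).symm)
  rintro w v h _ ⟨j, hj, rfl⟩
  refine ⟨v.symm (w j), ?_, v.apply_symm_apply _⟩
  by_contra hk
  have := h _ hk
  rw [v.apply_symm_apply, w.injective.eq_iff] at this
  exact hk (by rwa [this])

variable [LinearOrder α] {u : Perm α} {a b : α}

theorem eq_one_of_strictMono [WellFoundedLT α] (hu : StrictMono u) : u = 1 :=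
  Equiv.ext (congrFun ((hu.range_inj strictMono_id).1 (by simp)))

theorem exists_covBy_apply_lt_of_ne_one [WellFoundedLT α] [SuccOrder α] [IsSuccArchimedean α]
    (hu : u ≠ 1) : ∃ a b, a ⋖ b ∧ u b < u a := by
  by_contra! h
  refine hu (eq_one_of_strictMono (strictMono_of_lt_succ fun a ha => ?_))
  exact (h _ _ (Order.covBy_succ_of_not_isMax ha)).lt_of_ne
    (u.injective.ne (Order.lt_succ_of_not_isMax ha).ne)

variable [Fintype α]

def inversions (u : Perm α) : Finset (α × α) :=
  {p | p.1 < p.2 ∧ u p.2 < u p.1}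

def numInversions (u : Perm α) : ℕ := u.inversions.card

@[simp]
theorem mem_inversions {p : α × α} : p ∈ u.inversions ↔ p.1 < p.2 ∧ u p.2 < u p.1 := by
  simp [inversions]

theorem numInversions_mul_swap_of_covBy (hab : a ⋖ b) (h : u a < u b) :
    (u * swap a b).numInversions = u.numInversions + 1 := by
  have hrest : (u * swap a b).inversions.erase (a, b) =
      (u.inversions.erase (a, b)).map (prodCongr (swap a b) (swap a b)).toEmbedding := by
    ext ⟨i, j⟩
    simp only [Finset.mem_erase, mem_inversions, Finset.mem_map_equiv, prodCongr_symm, symm_swap,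
      prodCongr_apply, Prod.map, mul_apply, ne_eq, Prod.mk.injEq]
    have hlt := hab.lt
    constructor
    · rintro ⟨hne, hij, hu⟩
      refine ⟨fun h => ?_, swap_lt_swap_of_covBy hab hij (by simpa using hne), hu⟩
      rw [swap_apply_eq_iff, swap_apply_eq_iff, swap_apply_left, swap_apply_right] at h
      exact absurd (h.1 ▸ h.2 ▸ hij) hlt.asymm
    · rintro ⟨hne, hij, hu⟩
      refine ⟨fun h => ?_, ?_, hu⟩
      · rw [h.1, h.2, swap_apply_left, swap_apply_right] at hij
        exact hlt.asymm hij
      · simpa using swap_lt_swap_of_covBy hab hij (by simpa using hne)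
  have hmem : (a, b) ∈ (u * swap a b).inversions := by simpa using ⟨hab.lt, h⟩
  have hnmem : (a, b) ∉ u.inversions := by simpa using fun _ => h.le
  unfold numInversions
  rw [← Finset.card_erase_add_one hmem, hrest, Finset.card_map, Finset.erase_eq_of_notMem hnmem]

@[simp]
theorem numInversions_one : (1 : Perm α).numInversions = 0 := by
  simp only [numInversions, Finset.card_eq_zero, Finset.eq_empty_iff_forall_notMem, mem_inversions,
    one_apply, not_and, not_lt]
  exact fun _ h => h.le

theorem numInversions_mul_swap_of_covBy_of_lt (hab : a ⋖ b) (h : u b < u a) :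
    (u * swap a b).numInversions + 1 = u.numInversions := by
  have := numInversions_mul_swap_of_covBy (u := u * swap a b) hab (by simpa using h)
  rwa [mul_swap_mul_self, eq_comm] at this

theorem numInversions_mul_swap_le (hab : a ⋖ b) :
    (u * swap a b).numInversions ≤ u.numInversions + 1 := by
  rcases (u.injective.ne hab.lt.ne).lt_or_gt with h | h
  · exact (numInversions_mul_swap_of_covBy hab h).le
  · have := numInversions_mul_swap_of_covBy_of_lt hab h
    omega

end Perm

end Equiv

theorem StrictMonoOn.eqOn_of_image_eq {α β : Type*} [LinearOrder α] [WellFoundedLT α]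
    [Preorder β] {f g : α → β} {s : Set α} (hf : StrictMonoOn f s) (hg : StrictMonoOn g s)
    (h : f '' s = g '' s) :
    Set.EqOn f g s := by
  have := (hf.domRestrict.range_inj hg.domRestrict).1
    (by simpa only [Set.range_domRestrict] using h)
  exact fun x hx => congrFun this ⟨x, hx⟩

open Equiv Equiv.Perm

section Words

variable {n : ℕ}

theorem exists_covBy_simpleT_eq_swap (i : Fin (n - 1)) :
    ∃ a b : Fin n, a ⋖ b ∧ simpleT i = swap a b :=
  ⟨_, _, Fin.covBy_iff.2 (Nat.covBy_iff_add_one_eq.2 rfl), rfl⟩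

theorem exists_simpleT_eq_swap {a b : Fin n} (hab : a ⋖ b) :
    ∃ i : Fin (n - 1), simpleT i = swap a b := by
  have hb := Nat.covBy_iff_add_one_eq.1 (Fin.covBy_iff.1 hab)
  refine ⟨⟨a, by omega⟩, ?_⟩
  simp only [simpleT]
  congr 1
  exact Fin.ext hb

def wordProd (ω : List (Fin (n - 1))) : Perm (Fin n) := (ω.map simpleT).prod

@[simp]
theorem wordProd_nil : wordProd ([] : List (Fin (n - 1))) = 1 := rfl

@[simp]
theorem wordProd_append_singleton (ω : List (Fin (n - 1))) (i : Fin (n - 1)) :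
    wordProd (ω ++ [i]) = wordProd ω * simpleT i := by
  simp [wordProd]

theorem numInversions_wordProd_le (ω : List (Fin (n - 1))) :
    (wordProd ω).numInversions ≤ ω.length := by
  induction ω using List.reverseRecOn with
  | nil => simp
  | append_singleton ω i ih =>
    obtain ⟨a, b, hab, hi⟩ := exists_covBy_simpleT_eq_swap i
    rw [wordProd_append_singleton, hi, List.length_append, List.length_singleton]
    exact (numInversions_mul_swap_le hab).trans (by omega)

theorem exists_wordProd_eq (w : Perm (Fin n)) :
    ∃ ω, wordProd ω = w ∧ ω.length = w.numInversions := by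
  obtain rfl | hw := eq_or_ne w 1
  · exact ⟨[], rfl, by simp⟩
  obtain ⟨a, b, hab, hba⟩ := exists_covBy_apply_lt_of_ne_one hw
  obtain ⟨i, hi⟩ := exists_simpleT_eq_swap hab
  have hdrop := numInversions_mul_swap_of_covBy_of_lt hab hba
  obtain ⟨ω, hω, hlen⟩ := exists_wordProd_eq (w * swap a b)
  exact ⟨ω ++ [i], by simp [hω, hi], by simp [hlen, ← hdrop]⟩
termination_by w.numInversions
decreasing_by omega

theorem isRedWord_iff {w : Perm (Fin n)} {ω : List (Fin (n - 1))} :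
    IsRedWord w ω ↔ wordProd ω = w ∧ ω.length = w.numInversions := by
  constructor
  · rintro ⟨hω, hmin⟩
    obtain ⟨ω', hω', hlen'⟩ := exists_wordProd_eq w
    exact ⟨hω, le_antisymm (hlen' ▸ hmin ω' hω') (hω ▸ numInversions_wordProd_le ω)⟩
  · rintro ⟨hω, hlen⟩
    exact ⟨hω, fun ω' hω' => hlen ▸ hω' ▸ numInversions_wordProd_le ω'⟩

theorem exists_wordProd_eraseIdx_eq_mul_swap (ω : List (Fin (n - 1))) {b c : Fin n} (hbc : b < c)
    (h : wordProd ω c < wordProd ω b) :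
    ∃ j < ω.length, wordProd (ω.eraseIdx j) = wordProd ω * swap b c := by
  induction ω using List.reverseRecOn generalizing b c with
  | nil => exact absurd h (by simpa using hbc.le)
  | append_singleton ω i ih =>
    obtain ⟨a, a', haa', hi⟩ := exists_covBy_simpleT_eq_swap i
    rw [wordProd_append_singleton, hi, mul_apply, mul_apply] at h
    by_cases hswap : swap a a' b < swap a a' c
    · obtain ⟨j, hj, hprod⟩ := ih hswap h
      refine ⟨j, by simp; omega, ?_⟩
      rw [List.eraseIdx_append_of_lt_length hj, wordProd_append_singleton,
        wordProd_append_singleton, hprod, hi, swap_apply_apply, swap_inv]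
      simp only [mul_assoc, swap_mul_self, mul_one]
    · -- an adjacent transposition reverses no pair other than its own
      have hbc' : (b, c) = (a, a') := by
        by_contra hne
        exact hswap (swap_lt_swap_of_covBy haa' hbc hne)
      obtain ⟨rfl, rfl⟩ := Prod.mk.inj hbc'
      refine ⟨ω.length, by simp, ?_⟩
      rw [List.eraseIdx_append_of_length_le le_rfl, Nat.sub_self, List.eraseIdx_cons_zero,
        List.append_nil, wordProd_append_singleton, hi, mul_swap_mul_self]

theorem exists_sublist_isRedWord (ω : List (Fin (n - 1))) :
    ∃ ρ, ρ.Sublist ω ∧ IsRedWord (wordProd ω) ρ := by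
  simp only [isRedWord_iff]
  induction ω using List.reverseRecOn with
  | nil => exact ⟨[], List.Sublist.slnil, rfl, by simp⟩
  | append_singleton ω i ih =>
    obtain ⟨ρ, hsub, hρ, hlen⟩ := ih
    obtain ⟨a, a', haa', hi⟩ := exists_covBy_simpleT_eq_swap i
    rw [wordProd_append_singleton, hi]
    rcases ((wordProd ω).injective.ne haa'.lt.ne).lt_or_gt with hasc | hdesc
    · refine ⟨ρ ++ [i], hsub.append_right [i], by rw [wordProd_append_singleton, hρ, hi], ?_⟩
      rw [numInversions_mul_swap_of_covBy haa' hasc, List.length_append, hlen,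
        List.length_singleton]
    · obtain ⟨j, hj, hprod⟩ := exists_wordProd_eraseIdx_eq_mul_swap ρ haa'.lt (hρ ▸ hdesc)
      refine ⟨ρ.eraseIdx j,
        (List.eraseIdx_sublist ρ j).trans (hsub.trans (List.sublist_append_left ω [i])),
        hρ ▸ hprod, ?_⟩
      have := numInversions_mul_swap_of_covBy_of_lt haa' hdesc
      rw [List.length_eraseIdx_of_lt hj]
      omega

end Words

section LeftRightExtrema

variable {n : ℕ} {u v w : Perm (Fin n)} {j k x : Fin n}

theorem le_lrMax (u : Perm (Fin n)) (h : k ≤ j) : u k ≤ lrMax u j :=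
  Finset.le_sup' (fun m => u m) (Finset.mem_Iic.2 h)

theorem lrMax_le (h : ∀ k ≤ j, u k ≤ x) : lrMax u j ≤ x :=
  Finset.sup'_le _ _ fun k hk => h k (Finset.mem_Iic.1 hk)

theorem exists_lrMax_eq (u : Perm (Fin n)) (j : Fin n) : ∃ m ≤ j, lrMax u j = u m := by
  obtain ⟨m, hm, he⟩ := Finset.exists_mem_eq_sup' ⟨j, Finset.mem_Iic.2 le_rfl⟩ (u ·)
  exact ⟨m, Finset.mem_Iic.1 hm, he⟩

theorem rlMin_le (u : Perm (Fin n)) (h : j ≤ k) : rlMin u j ≤ u k :=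
  Finset.inf'_le (fun m => u m) (Finset.mem_Ici.2 h)

theorem le_rlMin (h : ∀ k, j ≤ k → x ≤ u k) : x ≤ rlMin u j :=
  Finset.le_inf' _ _ fun k hk => h k (Finset.mem_Ici.1 hk)

theorem exists_rlMin_eq (u : Perm (Fin n)) (j : Fin n) : ∃ m, j ≤ m ∧ rlMin u j = u m := by
  obtain ⟨m, hm, he⟩ := Finset.exists_mem_eq_inf' ⟨j, Finset.mem_Ici.2 le_rfl⟩ (u ·)
  exact ⟨m, Finset.mem_Ici.1 hm, he⟩

theorem lrMax_le_lrMax (h : ∀ k ≤ j, ∃ k' ≤ j, u k ≤ v k') : lrMax u j ≤ lrMax v j :=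
  lrMax_le fun k hk => let ⟨_, hk', hle⟩ := h k hk; hle.trans (le_lrMax v hk')

theorem rlMin_le_rlMin (h : ∀ k, j ≤ k → ∃ k', j ≤ k' ∧ v k' ≤ u k) :
    rlMin v j ≤ rlMin u j :=
  le_rlMin fun k hk => let ⟨_, hk', hle⟩ := h k hk; (rlMin_le v hk').trans hle

theorem psiMat_eq_iff : psiMat w = psiMat v ↔ lrMax w = lrMax v ∧ rlMin w = rlMin v := by
  refine ⟨fun h => ?_, fun ⟨hα, hβ⟩ => by unfold psiMat; rw [hα, hβ]⟩
  have hcol (u : Perm (Fin n)) (j) : psiMat u (rlMin u j) j ∧ psiMat u (lrMax u j) j :=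
    have := (rlMin_le u le_rfl).trans (le_lrMax u (le_refl j))
    ⟨⟨le_rfl, this⟩, ⟨this, le_rfl⟩⟩
  have hw := hcol w; have hv := hcol v
  rw [h] at hw; rw [← h] at hv
  exact ⟨funext fun j => le_antisymm (hw j).2.2 (hv j).2.2,
    funext fun j => le_antisymm (hv j).1.1 (hw j).1.1⟩

theorem lrMax_mul_swap {a b c : Fin n} (hab : a < b) (hbc : b < c) (hb : v b < v a)
    (hc : v c < v a) : lrMax (v * swap b c) = lrMax v := by
  have hσa : swap b c a = a := swap_apply_of_ne_of_ne hab.ne (hab.trans hbc).ne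
  funext j
  apply le_antisymm <;> refine lrMax_le_lrMax fun k hk => ?_
  · obtain rfl | hkb := eq_or_ne k b
    · exact ⟨a, hab.le.trans hk, by simpa using hc.le⟩
    · exact ⟨_, swap_apply_le_of_le hbc hk hkb, le_rfl⟩
  · obtain rfl | hkb := eq_or_ne k b
    · exact ⟨a, hab.le.trans hk, by simpa [hσa] using hb.le⟩
    · exact ⟨_, swap_apply_le_of_le hbc hk hkb, by simp⟩

theorem rlMin_mul_swap {b c d : Fin n} (hbc : b < c) (hcd : c < d) (hb : v d < v b)
    (hc : v d < v c) : rlMin (v * swap b c) = rlMin v := by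
  have hσd : swap b c d = d := swap_apply_of_ne_of_ne (hbc.trans hcd).ne' hcd.ne'
  funext j
  apply le_antisymm <;> refine rlMin_le_rlMin fun k hk => ?_
  · obtain rfl | hkc := eq_or_ne k c
    · exact ⟨d, hk.trans hcd.le, by simpa [hσd] using hc.le⟩
    · exact ⟨_, le_swap_apply_of_le hbc hk hkc, by simp⟩
  · obtain rfl | hkc := eq_or_ne k c
    · exact ⟨d, hk.trans hcd.le, by simpa using hb.le⟩
    · exact ⟨_, le_swap_apply_of_le hbc hk hkc, le_rfl⟩

theorem lrMax_eq_self_iff : lrMax u j = u j ↔ ∀ k < j, lrMax u k < lrMax u j := by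
  obtain ⟨m, hmj, hm⟩ := exists_lrMax_eq u j
  constructor
  · intro h k hkj
    obtain ⟨m', hm'k, hm'⟩ := exists_lrMax_eq u k
    rw [hm', h]
    exact (le_lrMax u (hm'k.trans hkj.le)).trans_eq h |>.lt_of_ne
      (u.injective.ne (hm'k.trans_lt hkj).ne)
  · intro h
    obtain rfl | hmj := hmj.eq_or_lt
    · exact hm
    · exact absurd ((h m hmj).trans_eq hm) (le_lrMax u le_rfl).not_gt

theorem rlMin_eq_self_iff : rlMin u j = u j ↔ ∀ k, j < k → rlMin u j < rlMin u k := by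
  obtain ⟨m, hjm, hm⟩ := exists_rlMin_eq u j
  constructor
  · intro h k hjk
    obtain ⟨m', hkm', hm'⟩ := exists_rlMin_eq u k
    rw [hm', h]
    exact h.symm.trans_le (rlMin_le u (hjk.le.trans hkm')) |>.lt_of_ne
      (u.injective.ne (hjk.trans_le hkm').ne)
  · intro h
    obtain rfl | hjm := hjm.eq_or_lt
    · exact hm
    · exact absurd (hm.symm.trans_lt (h m hjm)) (rlMin_le u le_rfl).not_gt

theorem exists_lt_apply_lt_of_lrMax_ne (h : lrMax u j ≠ u j) : ∃ a < j, u j < u a := by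
  obtain ⟨m, hmj, hm⟩ := exists_lrMax_eq u j
  obtain rfl | hmj := hmj.eq_or_lt
  · exact absurd hm h
  · exact ⟨m, hmj, hm ▸ (le_lrMax u le_rfl).lt_of_ne (Ne.symm h)⟩

theorem exists_gt_apply_lt_of_rlMin_ne (h : rlMin u j ≠ u j) : ∃ d, j < d ∧ u d < u j := by
  obtain ⟨m, hjm, hm⟩ := exists_rlMin_eq u j
  obtain rfl | hjm := hjm.eq_or_lt
  · exact absurd hm h
  · exact ⟨m, hjm, hm ▸ (rlMin_le u le_rfl).lt_of_ne h⟩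

end LeftRightExtrema

section Avoiders

variable {n : ℕ} {u v w : Perm (Fin n)}

def middlePositions (u : Perm (Fin n)) : Set (Fin n) :=
  {j | lrMax u j ≠ u j ∧ rlMin u j ≠ u j}

theorem strictMonoOn_middlePositions (hu : Avoids4321 u) : StrictMonoOn u (middlePositions u) := by
  intro j₁ hj₁ j₂ hj₂ h12
  by_contra hcon
  obtain ⟨a, ha, hua⟩ := exists_lt_apply_lt_of_lrMax_ne hj₁.1
  obtain ⟨d, hd, hud⟩ := exists_gt_apply_lt_of_rlMin_ne hj₂.2
  have h21 : u j₂ < u j₁ := (not_lt.1 hcon).lt_of_ne (u.injective.ne h12.ne')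
  exact hu ⟨a, j₁, j₂, d, ha, h12, hd, hud, h21, hua⟩

theorem eq_of_avoids4321 (hw : Avoids4321 w) (hv : Avoids4321 v) (hα : lrMax w = lrMax v)
    (hβ : rlMin w = rlMin v) : w = v := by
  have hmax : ∀ j, lrMax w j = w j ↔ lrMax v j = v j := fun j => by
    rw [lrMax_eq_self_iff, lrMax_eq_self_iff, hα]
  have hmin : ∀ j, rlMin w j = w j ↔ rlMin v j = v j := fun j => by
    rw [rlMin_eq_self_iff, rlMin_eq_self_iff, hβ]
  have hM : middlePositions w = middlePositions v := by
    ext j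
    exact and_congr (hmax j).not (hmin j).not
  have hout : ∀ j ∉ middlePositions w, w j = v j := by
    intro j hj
    simp only [middlePositions, Set.mem_ofPred_eq, not_and_or, not_not] at hj
    rcases hj with h | h
    · rw [← h, hα, (hmax j).1 h]
    · rw [← h, hβ, (hmin j).1 h]
  ext1 j
  by_cases hj : j ∈ middlePositions w
  · exact (strictMonoOn_middlePositions hw).eqOn_of_image_eq
      (hM ▸ strictMonoOn_middlePositions hv) (image_eq_of_eqOn_compl hout) hj
  · exact hout j hj

theorem exists_sublist_isRedWord_of_avoids4321 (hw : Avoids4321 w) (ω : List (Fin (n - 1)))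
    (hα : lrMax (wordProd ω) = lrMax w) (hβ : rlMin (wordProd ω) = rlMin w) :
    ∃ ρ, ρ.Sublist ω ∧ IsRedWord w ρ := by
  by_cases hv : Avoids4321 (wordProd ω)
  · obtain rfl := eq_of_avoids4321 hv hw hα hβ
    exact exists_sublist_isRedWord ω
  obtain ⟨a, b, c, d, hab, hbc, hcd, hdc, hcb, hba⟩ := not_not.1 hv
  obtain ⟨j, hj, hprod⟩ := exists_wordProd_eraseIdx_eq_mul_swap ω hbc hcb
  obtain ⟨ρ, hsub, hρ⟩ := exists_sublist_isRedWord_of_avoids4321 hw (ω.eraseIdx j)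
    (by rw [hprod, lrMax_mul_swap hab hbc hba (hcb.trans hba), hα])
    (by rw [hprod, rlMin_mul_swap hbc hcd (hdc.trans hcb) hdc, hβ])
  exact ⟨ρ, hsub.trans (List.eraseIdx_sublist ω j), hρ⟩
termination_by ω.length
decreasing_by rw [List.length_eraseIdx_of_lt hj]; omega

theorem bruhatLE_of_avoids4321 (hw : Avoids4321 w) (h : lrMax w = lrMax v ∧ rlMin w = rlMin v) :
    bruhatLE w v := by
  obtain ⟨ω, hω, hlen⟩ := exists_wordProd_eq v
  exact ⟨ω, isRedWord_iff.2 ⟨hω, hlen⟩,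
    exists_sublist_isRedWord_of_avoids4321 hw ω (hω ▸ h.1.symm) (hω ▸ h.2.symm)⟩

end Avoiders

/-- `α_w = α_v` and `β_w = β_v` iff `w` and `v` have the same image in
the double Catalan monoid; moreover in each such class the (unique) 4321-avoiding
permutation is Bruhat-minimal. -/
theorem stmt_11 (n : ℕ) :
    (∀ w v : Equiv.Perm (Fin n),
      (lrMax w = lrMax v ∧ rlMin w = rlMin v) ↔ psiMat w = psiMat v) ∧
    (∀ w v : Equiv.Perm (Fin n), Avoids4321 w → psiMat w = psiMat v → bruhatLE w v) :=
  ⟨fun _ _ => psiMat_eq_iff.symm, fun _ _ hw h => bruhatLE_of_avoids4321 hw (psiMat_eq_iff.1 h)⟩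
end

section
/- A 4321-avoiding permutation w ∈ S_n is an involution (w² = id) if and only if its image in the double Catalan monoid is a symmetric Boolean matrix. -/
open Pointwise

section DoubleCatalanImage

variable {n : ℕ} (w : Equiv.Perm (Fin n))

lemma le_lrMax_iff {i j : Fin n} : i ≤ lrMax w j ↔ ∃ k ≤ j, i ≤ w k :=
  (Finset.le_sup'_iff _).trans (by simp)

lemma rlMin_le_iff {i j : Fin n} : rlMin w j ≤ i ↔ ∃ k ≥ j, w k ≤ i :=
  (Finset.inf'_le_iff _).trans (by simp)

lemma apply_le_lrMax (j : Fin n) : w j ≤ lrMax w j :=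
  (le_lrMax_iff w).2 ⟨j, le_rfl, le_rfl⟩

lemma rlMin_le_apply (j : Fin n) : rlMin w j ≤ w j :=
  (rlMin_le_iff w).2 ⟨j, le_rfl, le_rfl⟩

lemma le_lrMax_inv_iff {i j : Fin n} : i ≤ lrMax w⁻¹ j ↔ rlMin w i ≤ j := by
  rw [le_lrMax_iff, rlMin_le_iff]
  exact ⟨fun ⟨k, hkj, hik⟩ => ⟨w⁻¹ k, hik, by simpa using hkj⟩,
    fun ⟨k, hik, hkj⟩ => ⟨w k, hkj, by simpa using hik⟩⟩

lemma psiMat_inv (i j : Fin n) : psiMat w⁻¹ i j ↔ psiMat w j i := by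
  have hβ : rlMin w⁻¹ j ≤ i ↔ j ≤ lrMax w i := by simpa using (le_lrMax_inv_iff w⁻¹).symm
  rw [psiMat, psiMat, hβ, le_lrMax_inv_iff, and_comm]

lemma isGreatest_lrMax (j : Fin n) : IsGreatest {i | psiMat w i j} (lrMax w j) :=
  ⟨⟨(rlMin_le_apply w j).trans (apply_le_lrMax w j), le_rfl⟩, fun _ h => h.2⟩

lemma isLeast_rlMin (j : Fin n) : IsLeast {i | psiMat w i j} (rlMin w j) :=
  ⟨⟨le_rfl, (rlMin_le_apply w j).trans (apply_le_lrMax w j)⟩, fun _ h => h.1⟩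

lemma apply_eq_lrMax_iff {j : Fin n} : w j = lrMax w j ↔ ∀ i < j, lrMax w i < lrMax w j := by
  constructor
  · intro h i hij
    rw [← h]
    refine (Finset.sup'_lt_iff _).2 fun k hk => ?_
    have hkj : k < j := (Finset.mem_Iic.1 hk).trans_lt hij
    have hle : w k ≤ w j := by rw [h]; exact (le_lrMax_iff w).2 ⟨k, hkj.le, le_rfl⟩
    exact hle.lt_of_ne (w.injective.ne hkj.ne)
  · intro h
    obtain ⟨k, hk, hmax⟩ := Finset.exists_mem_eq_sup' ⟨j, Finset.mem_Iic.2 le_rfl⟩ (fun k => w k)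
    change lrMax w j = w k at hmax
    obtain rfl | hkj := (Finset.mem_Iic.1 hk).eq_or_lt
    · exact hmax.symm
    · exact absurd (hmax ▸ apply_le_lrMax w k) (h k hkj).not_ge

lemma apply_eq_rlMin_iff {j : Fin n} : w j = rlMin w j ↔ ∀ k > j, rlMin w j < rlMin w k := by
  constructor
  · intro h k hjk
    rw [← h]
    refine (Finset.lt_inf'_iff _).2 fun m hm => ?_
    have hjm : j < m := hjk.trans_le (Finset.mem_Ici.1 hm)
    have hle : w j ≤ w m := by rw [h]; exact (rlMin_le_iff w).2 ⟨m, hjm.le, le_rfl⟩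
    exact hle.lt_of_ne (w.injective.ne hjm.ne)
  · intro h
    obtain ⟨k, hk, hmin⟩ := Finset.exists_mem_eq_inf' ⟨j, Finset.mem_Ici.2 le_rfl⟩ (fun k => w k)
    change rlMin w j = w k at hmin
    obtain rfl | hjk := (Finset.mem_Ici.1 hk).eq_or_lt
    · exact hmin.symm
    · exact absurd (hmin ▸ rlMin_le_apply w k) (h k hjk).not_ge

lemma exists_lt_of_ne_lrMax {j : Fin n} (h : w j ≠ lrMax w j) : ∃ i < j, w j < w i := by
  obtain ⟨i, hi, hlt⟩ := (Finset.lt_sup'_iff _).1 ((apply_le_lrMax w j).lt_of_ne h)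
  exact ⟨i, (Finset.mem_Iic.1 hi).lt_of_ne (by rintro rfl; exact hlt.false), hlt⟩

lemma exists_gt_of_ne_rlMin {j : Fin n} (h : w j ≠ rlMin w j) : ∃ k > j, w k < w j := by
  obtain ⟨k, hk, hlt⟩ := (Finset.inf'_lt_iff _).1 ((rlMin_le_apply w j).lt_of_ne' h)
  exact ⟨k, (Finset.mem_Ici.1 hk).lt_of_ne' (by rintro rfl; exact hlt.false), hlt⟩

variable {w}

lemma Avoids4321.inv (hw : Avoids4321 w) : Avoids4321 w⁻¹ := by
  rintro ⟨i, j, k, l, hij, hjk, hkl, hlk, hkj, hji⟩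
  exact hw ⟨w⁻¹ l, w⁻¹ k, w⁻¹ j, w⁻¹ i, hlk, hkj, hji, by simpa, by simpa, by simpa⟩

lemma Avoids4321.strictMonoOn (hw : Avoids4321 w) :
    StrictMonoOn w {j | w j = lrMax w j ∨ w j = rlMin w j}ᶜ := by
  intro a ha b hb hab
  simp only [Set.mem_compl_iff, Set.mem_ofPred_eq, not_or] at ha hb
  obtain ⟨i, hia, hai⟩ := exists_lt_of_ne_lrMax w ha.1
  obtain ⟨l, hbl, hlb⟩ := exists_gt_of_ne_rlMin w hb.2
  by_contra hba
  have hba : w b < w a := (not_lt.1 hba).lt_of_ne (w.injective.ne hab.ne')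
  exact hw ⟨i, a, b, l, hia, hab, hbl, hlb, hba, hai⟩

theorem Avoids4321.eq_of_lrMax_eq_of_rlMin_eq {v : Equiv.Perm (Fin n)} (hw : Avoids4321 w)
    (hv : Avoids4321 v) (hα : lrMax w = lrMax v) (hβ : rlMin w = rlMin v) : w = v := by
  have hmax (j : Fin n) : w j = lrMax w j ↔ v j = lrMax v j := by
    rw [apply_eq_lrMax_iff, apply_eq_lrMax_iff, hα]
  have hmin (j : Fin n) : w j = rlMin w j ↔ v j = rlMin v j := by
    rw [apply_eq_rlMin_iff, apply_eq_rlMin_iff, hβ]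
  set R := {j | w j = lrMax w j ∨ w j = rlMin w j}
  have hR : {j | v j = lrMax v j ∨ v j = rlMin v j} = R := by
    ext j; simp only [Set.mem_ofPred_eq, R, hmax, hmin]
  have hrecords : Set.EqOn w v R := by
    rintro j (h | h)
    · exact h.trans ((congrFun hα j).trans ((hmax j).1 h).symm)
    · exact h.trans ((congrFun hβ j).trans ((hmin j).1 h).symm)
  have hrest : Set.EqOn w v Rᶜ := by
    refine StrictMonoOn.eqOn_of_image_eq (s := Rᶜ) hw.strictMonoOn (hR ▸ hv.strictMonoOn) ?_
    rw [Set.image_compl_eq w.bijective, Set.image_compl_eq v.bijective, hrecords.image_eq]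
  have hall := hrecords.union hrest
  rw [Set.union_compl_self] at hall
  exact Equiv.ext fun j => hall (Set.mem_univ j)

theorem Avoids4321.eq_of_psiMat_eq {v : Equiv.Perm (Fin n)} (hw : Avoids4321 w)
    (hv : Avoids4321 v) (h : psiMat w = psiMat v) : w = v := by
  refine hw.eq_of_lrMax_eq_of_rlMin_eq hv (funext fun j => ?_) (funext fun j => ?_)
  · exact (isGreatest_lrMax w j).unique (h ▸ isGreatest_lrMax v j)
  · exact (isLeast_rlMin w j).unique (h ▸ isLeast_rlMin v j)

end DoubleCatalanImage

/-- A 4321-avoiding permutation is an involution iff its image in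
the double Catalan monoid is a symmetric Boolean matrix. -/
theorem stmt_13 (n : ℕ) (w : Equiv.Perm (Fin n)) (hw : Avoids4321 w) :
    w * w = 1 ↔ (∀ i j, psiMat w i j ↔ psiMat w j i) := by
  rw [← inv_eq_iff_mul_eq_one]
  constructor
  · intro h i j
    rw [← psiMat_inv, h]
  · intro hsymm
    refine hw.inv.eq_of_psiMat_eq hw (funext₂ fun i j => propext ?_)
    rw [psiMat_inv]
    exact hsymm j i
end
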